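/- Consider sequences indexed by the sample size n: sub-σ-algebras 𝒢ₙ ⊆ ℱ and random variables Yₙ, Xₙ¹, Xₙ² ∈ L²(P) with E[Yₙ] = θ for every n. Define bₙ = E[Yₙ | 𝒢ₙ] − θ, dₙʲ = E[Xₙʲ | 𝒢ₙ] − θ, and eₙ = −2·Cov(bₙ, dₙ¹ − dₙ²). If Var(Yₙ) → 0 as n → ∞ and there is a constant C with Var(Xₙʲ) ≤ C for all n and j = 1, 2, then eₙ → 0; consequently, with vₙ and cₙʲ the conditional variance of Yₙ and conditional covariance of Xₙʲ and Yₙ given 𝒢ₙ, and scoreₙʲ = E[(Xₙʲ − Yₙ)² | 𝒢ₙ] − vₙ + 2cₙʲ, the quantity E[scoreₙ¹ − scoreₙ²] − (E[(Xₙ¹ − θ)²] − E[(Xₙ² − θ)²]) converges to 0. -/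

import Mathlib

/-! Both quantities equal `-2 (Cov(E[Xₙ¹|𝒢ₙ], E[Yₙ|𝒢ₙ]) - Cov(E[Xₙ²|𝒢ₙ], E[Yₙ|𝒢ₙ]))`: the first
because covariance ignores shifts by constants, the second by the tower property and
`E[Yₙ] = θ`. By the law of total variance, conditioning does not increase variance, so by
Cauchy–Schwarz each of these covariances is at most `√C · √Var(Yₙ)`, which tends to `0`. -/

open MeasureTheory Filter ProbabilityTheory Topology

section

variable {Ω : Type*} {m₀ : MeasurableSpace Ω} {μ : Measure Ω} {X Y : Ω → ℝ}

lemma covariance_sq_le_variance_mul_variance [IsFiniteMeasure μ] (hX : MemLp X 2 μ)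
    (hY : MemLp Y 2 μ) : cov[X, Y; μ] ^ 2 ≤ Var[X; μ] * Var[Y; μ] := by
  have hquad : ∀ t : ℝ, 0 ≤ Var[X; μ] * (t * t) + 2 * cov[X, Y; μ] * t + Var[Y; μ] := by
    intro t
    have h := variance_add (hX.const_smul t) hY
    rw [variance_smul, covariance_smul_left] at h
    linarith [variance_nonneg (t • X + Y) μ]
  have hdiscrim := discrim_le_zero hquad
  rw [discrim] at hdiscrim
  linarith

lemma abs_covariance_le_sqrt_mul_sqrt [IsFiniteMeasure μ] (hX : MemLp X 2 μ)
    (hY : MemLp Y 2 μ) : |cov[X, Y; μ]| ≤ √Var[X; μ] * √Var[Y; μ] := by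
  rw [← Real.sqrt_mul (variance_nonneg X μ)]
  exact Real.abs_le_sqrt (covariance_sq_le_variance_mul_variance hX hY)

lemma variance_condExp_le [IsProbabilityMeasure μ] {m : MeasurableSpace Ω} (hm : m ≤ m₀)
    (hX : MemLp X 2 μ) : Var[μ[X|m]; μ] ≤ Var[X; μ] := by
  have hnonneg : 0 ≤ μ[Var[X; μ | m]] :=
    integral_nonneg_of_ae (condExp_nonneg (ae_of_all _ fun ω => sq_nonneg _))
  linarith [integral_condVar_add_variance_condExp hm hX]

lemma abs_covariance_condExp_le [IsProbabilityMeasure μ] {m : MeasurableSpace Ω} (hm : m ≤ m₀)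
    (hX : MemLp X 2 μ) (hY : MemLp Y 2 μ) :
    |cov[μ[X|m], μ[Y|m]; μ]| ≤ √Var[X; μ] * √Var[Y; μ] :=
  (abs_covariance_le_sqrt_mul_sqrt (hX.condExp one_le_two) (hY.condExp one_le_two)).trans <|
    mul_le_mul (Real.sqrt_le_sqrt (variance_condExp_le hm hX))
      (Real.sqrt_le_sqrt (variance_condExp_le hm hY)) (Real.sqrt_nonneg _) (Real.sqrt_nonneg _)

lemma integral_sub_mul_sub_sub_eq_covariance_sub [IsProbabilityMeasure μ] {U V₁ V₂ : Ω → ℝ}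
    (hU : MemLp U 2 μ) (hV₁ : MemLp V₁ 2 μ) (hV₂ : MemLp V₂ 2 μ) (a b c : ℝ) :
    (∫ ω, (U ω - a) * ((V₁ ω - b) - (V₂ ω - c)) ∂μ)
        - (∫ ω, (U ω - a) ∂μ) * ∫ ω, ((V₁ ω - b) - (V₂ ω - c)) ∂μ
      = cov[V₁, U; μ] - cov[V₂, U; μ] := by
  have hU' : MemLp (fun ω => U ω - a) 2 μ := hU.sub (memLp_const a)
  have hV₁' : MemLp (fun ω => V₁ ω - b) 2 μ := hV₁.sub (memLp_const b)
  have hV₂' : MemLp (fun ω => V₂ ω - c) 2 μ := hV₂.sub (memLp_const c)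
  have h : cov[fun ω => U ω - a, fun ω => (V₁ ω - b) - (V₂ ω - c); μ]
      = (∫ ω, (U ω - a) * ((V₁ ω - b) - (V₂ ω - c)) ∂μ)
        - (∫ ω, (U ω - a) ∂μ) * ∫ ω, ((V₁ ω - b) - (V₂ ω - c)) ∂μ :=
    covariance_eq_sub hU' (hV₁'.sub hV₂')
  rw [← h, covariance_sub_const_left (hU.integrable one_le_two),
    covariance_fun_sub_right hU hV₁' hV₂', covariance_sub_const_right (hV₁.integrable one_le_two),
    covariance_sub_const_right (hV₂.integrable one_le_two), covariance_comm U,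
    covariance_comm U]

lemma integral_sub_sq [IsFiniteMeasure μ] (hX : MemLp X 2 μ) (hY : MemLp Y 2 μ) :
    ∫ ω, (X ω - Y ω) ^ 2 ∂μ = ∫ ω, X ω ^ 2 ∂μ - 2 * ∫ ω, X ω * Y ω ∂μ + ∫ ω, Y ω ^ 2 ∂μ := by
  have hXY : Integrable (fun ω => 2 * (X ω * Y ω)) μ := (hX.integrable_mul hY).const_mul 2
  simp_rw [sub_sq, mul_assoc]
  rw [integral_add (hX.integrable_sq.sub' hXY) hY.integrable_sq,
    integral_sub hX.integrable_sq hXY, integral_const_mul]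

noncomputable def adjustedScore (μ : Measure Ω) (m : MeasurableSpace Ω) (X Y : Ω → ℝ) :
    Ω → ℝ := fun ω =>
  (μ[(fun x => (X x - Y x) ^ 2)|m]) ω - ((μ[(fun x => Y x ^ 2)|m]) ω - ((μ[Y|m]) ω) ^ 2)
    + 2 * ((μ[(fun x => X x * Y x)|m]) ω - (μ[X|m]) ω * (μ[Y|m]) ω)

lemma integrable_adjustedScore [IsFiniteMeasure μ] {m : MeasurableSpace Ω} (hX : MemLp X 2 μ)
    (hY : MemLp Y 2 μ) : Integrable (adjustedScore μ m X Y) μ := by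
  have hsq : Integrable (fun ω => (μ[Y|m]) ω ^ 2) μ := (hY.condExp one_le_two).integrable_sq
  have hprod : Integrable (fun ω => (μ[X|m]) ω * (μ[Y|m]) ω) μ :=
    (hX.condExp one_le_two).integrable_mul (hY.condExp one_le_two)
  exact (integrable_condExp.sub' (integrable_condExp.sub' hsq)).add
    ((integrable_condExp.sub' hprod).const_mul 2)

lemma integral_adjustedScore [IsFiniteMeasure μ] {m : MeasurableSpace Ω} (hm : m ≤ m₀)
    (hX : MemLp X 2 μ) (hY : MemLp Y 2 μ) :
    ∫ ω, adjustedScore μ m X Y ω ∂μ = ∫ ω, (X ω - Y ω) ^ 2 ∂μ - ∫ ω, Y ω ^ 2 ∂μ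
      + ∫ ω, (μ[Y|m]) ω ^ 2 ∂μ
      + 2 * (∫ ω, X ω * Y ω ∂μ - ∫ ω, (μ[X|m]) ω * (μ[Y|m]) ω ∂μ) := by
  have hsq : Integrable (fun ω => (μ[Y|m]) ω ^ 2) μ := (hY.condExp one_le_two).integrable_sq
  have hprod : Integrable (fun ω => (μ[X|m]) ω * (μ[Y|m]) ω) μ :=
    (hX.condExp one_le_two).integrable_mul (hY.condExp one_le_two)
  have hcondVar : Integrable (fun ω => (μ[(fun x => Y x ^ 2)|m]) ω - (μ[Y|m]) ω ^ 2) μ :=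
    integrable_condExp.sub' hsq
  have hcondCov : Integrable
      (fun ω => (μ[(fun x => X x * Y x)|m]) ω - (μ[X|m]) ω * (μ[Y|m]) ω) μ :=
    integrable_condExp.sub' hprod
  unfold adjustedScore
  rw [integral_add (integrable_condExp.sub' hcondVar) (hcondCov.const_mul 2),
    integral_sub integrable_condExp hcondVar, integral_const_mul,
    integral_sub integrable_condExp hsq, integral_sub integrable_condExp hprod,
    integral_condExp hm, integral_condExp hm, integral_condExp hm]
  ring

lemma integral_adjustedScore_sub_integral_sq [IsProbabilityMeasure μ] {m : MeasurableSpace Ω}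
    (hm : m ≤ m₀) (hX : MemLp X 2 μ) (hY : MemLp Y 2 μ) {θ : ℝ} (hYθ : ∫ ω, Y ω ∂μ = θ) :
    ∫ ω, adjustedScore μ m X Y ω ∂μ - ∫ ω, (X ω - θ) ^ 2 ∂μ
      = Var[μ[Y|m]; μ] - 2 * cov[μ[X|m], μ[Y|m]; μ] := by
  have hYc := hY.condExp (m := m) one_le_two
  have hXc := hX.condExp (m := m) one_le_two
  rw [integral_adjustedScore hm hX hY, integral_sub_sq hX hY, integral_sub_sq hX (memLp_const θ),
    variance_eq_sub hYc, covariance_eq_sub hXc hYc, integral_condExp hm, integral_condExp hm,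
    hYθ, integral_mul_const]
  simp only [add_sub_cancel_right, integral_const, probReal_univ, smul_eq_mul, one_mul,
    Pi.pow_apply, Pi.mul_apply]
  ring

lemma integral_adjustedScore_sub_adjustedScore [IsProbabilityMeasure μ] {m : MeasurableSpace Ω}
    (hm : m ≤ m₀) {X₁ X₂ : Ω → ℝ} (hX₁ : MemLp X₁ 2 μ) (hX₂ : MemLp X₂ 2 μ) (hY : MemLp Y 2 μ)
    {θ : ℝ} (hYθ : ∫ ω, Y ω ∂μ = θ) :
    ∫ ω, (adjustedScore μ m X₁ Y ω - adjustedScore μ m X₂ Y ω) ∂μ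
        - (∫ ω, (X₁ ω - θ) ^ 2 ∂μ - ∫ ω, (X₂ ω - θ) ^ 2 ∂μ)
      = -2 * (cov[μ[X₁|m], μ[Y|m]; μ] - cov[μ[X₂|m], μ[Y|m]; μ]) := by
  rw [integral_sub (integrable_adjustedScore hX₁ hY) (integrable_adjustedScore hX₂ hY)]
  linear_combination integral_adjustedScore_sub_integral_sq hm hX₁ hY hYθ
    - integral_adjustedScore_sub_integral_sq hm hX₂ hY hYθ

lemma tendsto_covariance_condExp_of_tendsto_variance [IsProbabilityMeasure μ] {ι : Type*}
    {l : Filter ι} {G : ι → MeasurableSpace Ω} (hG : ∀ i, G i ≤ m₀) {X Y : ι → Ω → ℝ}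
    (hX : ∀ i, MemLp (X i) 2 μ) (hY : ∀ i, MemLp (Y i) 2 μ)
    (hvarY : Tendsto (fun i => Var[Y i; μ]) l (𝓝 0)) {C : ℝ} (hvarX : ∀ i, Var[X i; μ] ≤ C) :
    Tendsto (fun i => cov[μ[X i|G i], μ[Y i|G i]; μ]) l (𝓝 0) := by
  have hbound : Tendsto (fun i => √C * √Var[Y i; μ]) l (𝓝 0) := by
    simpa using ((Real.continuous_sqrt.tendsto 0).comp hvarY).const_mul √C
  refine squeeze_zero_norm (fun i => ?_) hbound
  rw [Real.norm_eq_abs]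
  exact (abs_covariance_condExp_le (hG i) (hX i) (hY i)).trans <|
    mul_le_mul_of_nonneg_right (Real.sqrt_le_sqrt (hvarX i)) (Real.sqrt_nonneg _)

end

/-- Consider sequences indexed by the sample size `n`:
sub-σ-algebras `𝒢ₙ ⊆ ℱ` and random variables `Yₙ, Xₙ¹, Xₙ² ∈ L²` with
`E[Yₙ] = θ` for every `n`.  Define `bₙ = E[Yₙ|𝒢ₙ] − θ`,
`dₙʲ = E[Xₙʲ|𝒢ₙ] − θ`, and `eₙ = −2·Cov(bₙ, dₙ¹ − dₙ²)`.  If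
`Var(Yₙ) → 0` and `Var(Xₙʲ) ≤ C` for all `n` and `j = 1, 2`, then `eₙ → 0`;
consequently, with `vₙ` and `cₙʲ` the conditional variance of `Yₙ` and the
conditional covariance of `Xₙʲ` and `Yₙ` given `𝒢ₙ`, and
`scoreₙʲ = E[(Xₙʲ − Yₙ)² | 𝒢ₙ] − vₙ + 2cₙʲ`, the quantity
`E[scoreₙ¹ − scoreₙ²] − (E[(Xₙ¹ − θ)²] − E[(Xₙ² − θ)²])` converges to `0`. -/
theorem adjusted_score_consistency
    {Ω : Type*} {F : MeasurableSpace Ω} {μ : Measure Ω} [IsProbabilityMeasure μ]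
    (G : ℕ → MeasurableSpace Ω) (hG : ∀ n, G n ≤ F)
    (θ : ℝ) (Y X₁ X₂ : ℕ → Ω → ℝ)
    (hY : ∀ n, MemLp (Y n) 2 μ)
    (hX₁ : ∀ n, MemLp (X₁ n) 2 μ) (hX₂ : ∀ n, MemLp (X₂ n) 2 μ)
    (hunbiased : ∀ n, ∫ ω, Y n ω ∂μ = θ)
    (hvarY : Tendsto (fun n => (∫ ω, Y n ω ^ 2 ∂μ) - (∫ ω, Y n ω ∂μ) ^ 2)
      atTop (nhds 0))
    (C : ℝ)
    (hbdd₁ : ∀ n, (∫ ω, X₁ n ω ^ 2 ∂μ) - (∫ ω, X₁ n ω ∂μ) ^ 2 ≤ C)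
    (hbdd₂ : ∀ n, (∫ ω, X₂ n ω ^ 2 ∂μ) - (∫ ω, X₂ n ω ∂μ) ^ 2 ≤ C) :
    Tendsto (fun n => (-2 : ℝ)
        * ((∫ ω, ((μ[Y n|G n]) ω - θ)
              * (((μ[X₁ n|G n]) ω - θ) - ((μ[X₂ n|G n]) ω - θ)) ∂μ)
          - (∫ ω, ((μ[Y n|G n]) ω - θ) ∂μ)
            * ∫ ω, (((μ[X₁ n|G n]) ω - θ) - ((μ[X₂ n|G n]) ω - θ)) ∂μ))
      atTop (nhds 0)
    ∧ Tendsto (fun n =>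
        (∫ ω, (((μ[(fun x => (X₁ n x - Y n x) ^ 2)|G n]) ω
              - ((μ[(fun x => Y n x ^ 2)|G n]) ω - ((μ[Y n|G n]) ω) ^ 2)
              + 2 * ((μ[(fun x => X₁ n x * Y n x)|G n]) ω
                  - (μ[X₁ n|G n]) ω * (μ[Y n|G n]) ω))
            - ((μ[(fun x => (X₂ n x - Y n x) ^ 2)|G n]) ω
              - ((μ[(fun x => Y n x ^ 2)|G n]) ω - ((μ[Y n|G n]) ω) ^ 2)
              + 2 * ((μ[(fun x => X₂ n x * Y n x)|G n]) ω
                  - (μ[X₂ n|G n]) ω * (μ[Y n|G n]) ω))) ∂μ)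
          - ((∫ ω, (X₁ n ω - θ) ^ 2 ∂μ) - ∫ ω, (X₂ n ω - θ) ^ 2 ∂μ))
      atTop (nhds 0) := by
  have hcov_tendsto : ∀ {X : ℕ → Ω → ℝ}, (∀ n, MemLp (X n) 2 μ) →
      (∀ n, (∫ ω, X n ω ^ 2 ∂μ) - (∫ ω, X n ω ∂μ) ^ 2 ≤ C) →
      Tendsto (fun n => cov[μ[X n|G n], μ[Y n|G n]; μ]) atTop (𝓝 0) := fun hX hbdd =>
    tendsto_covariance_condExp_of_tendsto_variance hG hX hY
      (hvarY.congr fun n => (variance_eq_sub (hY n)).symm)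
      (fun n => (variance_eq_sub (hX n)).trans_le (hbdd n))
  have hlim : Tendsto (fun n => -2 * (cov[μ[X₁ n|G n], μ[Y n|G n]; μ]
      - cov[μ[X₂ n|G n], μ[Y n|G n]; μ])) atTop (𝓝 0) := by
    simpa using ((hcov_tendsto hX₁ hbdd₁).sub (hcov_tendsto hX₂ hbdd₂)).const_mul (-2)
  refine ⟨hlim.congr fun n => ?_, hlim.congr fun n => ?_⟩
  · rw [integral_sub_mul_sub_sub_eq_covariance_sub ((hY n).condExp one_le_two)
      ((hX₁ n).condExp one_le_two) ((hX₂ n).condExp one_le_two)]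
  · exact (integral_adjustedScore_sub_adjustedScore (hG n) (hX₁ n) (hX₂ n) (hY n)
      (hunbiased n)).symm
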